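/- Let p ≥ 1 and let E = EuclideanSpace ℝ (Fin p). The map r : F₂(E) → S^{p−1} defined by r(x,y) = (x − y)/‖x − y‖, where S^{p−1} is the unit sphere in E, is a continuous homotopy equivalence. In particular, F₂(ℝ^p) has the homotopy type of a sphere of dimension p − 1. -/

import Mathlib

open scoped Manifold unitInterval

noncomputable section ConfigPrelude

/-- The ordered configuration space of `k` distinct points in `M`. -/
def Config (M : Type*) [TopologicalSpace M] (k : ℕ) : Type _ :=
  {x : Fin k → M // Function.Injective x}

instance Config.instTopologicalSpace (M : Type*) [TopologicalSpace M] (k : ℕ) :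
    TopologicalSpace (Config M k) :=
  inferInstanceAs (TopologicalSpace {x : Fin k → M // Function.Injective x})

/-- The subspace inclusion `F₂(M) ↪ M × M`. -/
def configIncl₂ (M : Type*) [TopologicalSpace M] : C(Config M 2, M × M) :=
  ⟨fun x => (x.1 0, x.1 1),
    ((continuous_apply (0 : Fin 2)).comp continuous_subtype_val).prodMk
      ((continuous_apply (1 : Fin 2)).comp continuous_subtype_val)⟩

/-- A homotopy equivalence `f : A → B` is an F₂-homotopy equivalence if there is a
homotopy equivalence `φ : F₂(A) → F₂(B)` with `ι_B ∘ φ` homotopic to `(f × f) ∘ ι_A`. -/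
def IsF2HomotopyEquiv {A B : Type*} [TopologicalSpace A] [TopologicalSpace B]
    (f : ContinuousMap.HomotopyEquiv A B) : Prop :=
  ∃ φ : ContinuousMap.HomotopyEquiv (Config A 2) (Config B 2),
    ((configIncl₂ B).comp φ.toFun).Homotopic
      ((f.toFun.prodMap f.toFun).comp (configIncl₂ A))

/-- A continuous map is a homotopy equivalence. -/
def IsHtpyEquiv {X Y : Type*} [TopologicalSpace X] [TopologicalSpace Y] (f : C(X, Y)) : Prop :=
  ∃ g : C(Y, X), (g.comp f).Homotopic (ContinuousMap.id X) ∧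
    (f.comp g).Homotopic (ContinuousMap.id Y)

/-- The projection of a configuration of `k` points onto its first `r` points. -/
def configProjLE (M : Type*) [TopologicalSpace M] {k r : ℕ} (h : r ≤ k) :
    C(Config M k, Config M r) :=
  ⟨fun x => ⟨fun i => x.1 (Fin.castLE h i),
      fun i j hij => Fin.ext (by simpa using congrArg Fin.val (x.2 hij))⟩, by
    apply Continuous.subtype_mk
    apply continuous_pi
    intro i
    exact (continuous_apply (Fin.castLE h i)).comp continuous_subtype_val⟩

/-- `F_k(A×J)` : configurations `((a₁,t₁),…,(a_k,t_k))` in `A × ℝ` with `|tᵢ| ≤ i − 1`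
(0-indexed: `|t_i| ≤ i`). -/
def ConfigJ (A : Type*) [TopologicalSpace A] (k : ℕ) : Type _ :=
  {x : Fin k → A × ℝ // Function.Injective x ∧ ∀ i : Fin k, |(x i).2| ≤ (i.val : ℝ)}

instance ConfigJ.instTopologicalSpace (A : Type*) [TopologicalSpace A] (k : ℕ) :
    TopologicalSpace (ConfigJ A k) :=
  inferInstanceAs (TopologicalSpace
    {x : Fin k → A × ℝ // Function.Injective x ∧ ∀ i : Fin k, |(x i).2| ≤ (i.val : ℝ)})

/-- The subspace inclusion `F_k(A×J) ↪ F_k(A×ℝ)`. -/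
def configJIncl (A : Type*) [TopologicalSpace A] (k : ℕ) :
    C(ConfigJ A k, Config (A × ℝ) k) :=
  ⟨fun x => ⟨x.1, x.2.1⟩, Continuous.subtype_mk continuous_subtype_val _⟩

/-- The projection of `F_k(A×J)` onto the first `r` points. -/
def configJProjLE (A : Type*) [TopologicalSpace A] {k r : ℕ} (h : r ≤ k) :
    C(ConfigJ A k, ConfigJ A r) :=
  ⟨fun x => ⟨fun i => x.1 (Fin.castLE h i),
      ⟨fun i j hij => Fin.ext (by simpa using congrArg Fin.val (x.2.1 hij)),
       fun i => by simpa using x.2.2 (Fin.castLE h i)⟩⟩, by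
    apply Continuous.subtype_mk
    apply continuous_pi
    intro i
    exact (continuous_apply (Fin.castLE h i)).comp continuous_subtype_val⟩

lemma abs_coe_end {k : ℕ} (ε : ({-(k : ℝ), (k : ℝ)} : Set ℝ)) : |(ε : ℝ)| = (k : ℝ) := by
  rcases ε.2 with h | h <;> rw [h] <;> simp

/-- Appending a point `(a, ε)` with `ε ∈ {−k, k}` to a configuration in `F_k(A×J)` gives a
configuration in `∂F_{k+1}(A×J) ⊆ F_{k+1}(A×J)`. -/
def configJAppend (A : Type*) [TopologicalSpace A] (k : ℕ) :
    C(ConfigJ A k × (A × ({-(k : ℝ), (k : ℝ)} : Set ℝ)), ConfigJ A (k + 1)) := by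
  refine ⟨fun p => ⟨Fin.snoc p.1.1 (p.2.1, (p.2.2 : ℝ)), ?_, ?_⟩, ?_⟩
  · intro i j hij
    induction i using Fin.lastCases with
    | last =>
      induction j using Fin.lastCases with
      | last => rfl
      | cast j =>
        exfalso
        rw [Fin.snoc_last, Fin.snoc_castSucc] at hij
        have h1 : |((p.1.1 j).2)| ≤ (j.val : ℝ) := p.1.2.2 j
        have h2 : ((p.1.1 j).2) = (p.2.2 : ℝ) := (congrArg Prod.snd hij).symm
        have h3 : ((j.val : ℕ) : ℝ) < (k : ℝ) := by exact_mod_cast j.2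
        rw [h2, abs_coe_end] at h1
        try simp only [Fin.val_castSucc] at *
        linarith
    | cast i =>
      induction j using Fin.lastCases with
      | last =>
        exfalso
        rw [Fin.snoc_last, Fin.snoc_castSucc] at hij
        have h1 : |((p.1.1 i).2)| ≤ (i.val : ℝ) := p.1.2.2 i
        have h2 : ((p.1.1 i).2) = (p.2.2 : ℝ) := congrArg Prod.snd hij
        have h3 : ((i.val : ℕ) : ℝ) < (k : ℝ) := by exact_mod_cast i.2
        rw [h2, abs_coe_end] at h1
        linarith
      | cast j =>
        rw [Fin.snoc_castSucc, Fin.snoc_castSucc] at hij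
        exact congrArg Fin.castSucc (p.1.2.1 hij)
  · intro i
    induction i using Fin.lastCases with
    | last => rw [Fin.snoc_last]; simp [abs_coe_end]
    | cast i => rw [Fin.snoc_castSucc]; simpa using p.1.2.2 i
  · refine Continuous.subtype_mk (continuous_pi fun i => ?_) _
    induction i using Fin.lastCases with
    | last =>
      simp only [Fin.snoc_last]
      exact ((continuous_fst.comp continuous_snd).prodMk
        (continuous_subtype_val.comp (continuous_snd.comp continuous_snd)))
    | cast i =>
      simp only [Fin.snoc_castSucc]
      exact (continuous_apply i).comp (continuous_subtype_val.comp continuous_fst)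

/-- A two-point configuration. -/
def config2 {M : Type*} [TopologicalSpace M] (p q : M) (h : p ≠ q) : Config M 2 :=
  ⟨![p, q], by intro i j hij; fin_cases i <;> fin_cases j <;> simp_all⟩

/-- A three-point configuration. -/
def config3 {M : Type*} [TopologicalSpace M] (p q r : M)
    (h1 : p ≠ q) (h2 : p ≠ r) (h3 : q ≠ r) : Config M 3 :=
  ⟨![p, q, r], by intro i j hij; fin_cases i <;> fin_cases j <;> simp_all⟩

/-- Generating relation for the unreduced suspension. -/
def SuspRel (X : Type*) : (X × unitInterval) → (X × unitInterval) → Prop := fun p q =>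
  (p.2 = 0 ∧ q.2 = 0) ∨ (p.2 = 1 ∧ q.2 = 1)

/-- The unreduced suspension of a space. -/
def Susp (X : Type*) [TopologicalSpace X] : Type _ := Quot (SuspRel X)

instance Susp.instTopologicalSpace (X : Type*) [TopologicalSpace X] :
    TopologicalSpace (Susp X) :=
  inferInstanceAs (TopologicalSpace (Quot (SuspRel X)))

/-- The unreduced suspension as an endofunctor of `TopCat` (on objects). -/
def SuspT (X : TopCat) : TopCat := TopCat.of (Susp X)

/-- The iterated unreduced suspension. -/
def IterSuspT : ℕ → TopCat → TopCat
  | 0, X => X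
  | m + 1, X => SuspT (IterSuspT m X)

/-- Generating relation for the double mapping cylinder of a span `X ←f− W −g→ Z`. -/
inductive DMCRel {W X Z : Type*} (f : W → X) (g : W → Z) :
    (X ⊕ ((W × unitInterval) ⊕ Z)) → (X ⊕ ((W × unitInterval) ⊕ Z)) → Prop
  | zero (w : W) : DMCRel f g (Sum.inl (f w)) (Sum.inr (Sum.inl (w, 0)))
  | one (w : W) : DMCRel f g (Sum.inr (Sum.inr (g w))) (Sum.inr (Sum.inl (w, 1)))

/-- The double mapping cylinder of a span `X ←f− W −g→ Z`. -/
def DblCyl {W X Z : Type*} [TopologicalSpace W] [TopologicalSpace X] [TopologicalSpace Z]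
    (f : W → X) (g : W → Z) : Type _ := Quot (DMCRel f g)

instance DblCyl.instTopologicalSpace {W X Z : Type*} [TopologicalSpace W] [TopologicalSpace X]
    [TopologicalSpace Z] (f : W → X) (g : W → Z) : TopologicalSpace (DblCyl f g) :=
  inferInstanceAs (TopologicalSpace (Quot (DMCRel f g)))

/-- The homotopy fiber of `v : C → Y` over `y : Y`. -/
def HFiber {X Y : Type*} [TopologicalSpace X] [TopologicalSpace Y] (v : C(X, Y)) (y : Y) :
    Type _ :=
  {p : X × C(unitInterval, Y) // p.2 0 = v p.1 ∧ p.2 1 = y}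

instance HFiber.instTopologicalSpace {X Y : Type*} [TopologicalSpace X] [TopologicalSpace Y]
    (v : C(X, Y)) (y : Y) : TopologicalSpace (HFiber v y) :=
  inferInstanceAs (TopologicalSpace {p : X × C(unitInterval, Y) // p.2 0 = v p.1 ∧ p.2 1 = y})

/-- The standard homotopy pullback of `p : X → B` and `q : Y → B`. -/
def HPullback {X Y B : Type*} [TopologicalSpace X] [TopologicalSpace Y] [TopologicalSpace B]
    (p : C(X, B)) (q : C(Y, B)) : Type _ :=
  {u : X × C(unitInterval, B) × Y // u.2.1 0 = p u.1 ∧ u.2.1 1 = q u.2.2}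

instance HPullback.instTopologicalSpace {X Y B : Type*} [TopologicalSpace X]
    [TopologicalSpace Y] [TopologicalSpace B] (p : C(X, B)) (q : C(Y, B)) :
    TopologicalSpace (HPullback p q) :=
  inferInstanceAs (TopologicalSpace
    {u : X × C(unitInterval, B) × Y // u.2.1 0 = p u.1 ∧ u.2.1 1 = q u.2.2})

/-- A space is 2-connected if it is path-connected, simply connected, and has trivial `π₂`. -/
def TwoConnected (X : Type*) [TopologicalSpace X] : Prop :=
  PathConnectedSpace X ∧ SimplyConnectedSpace X ∧
    ∀ x : X, Subsingleton (HomotopyGroup (Fin 2) X x)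

/-- A type retopologized with the discrete topology. -/
def DiscretePoints (α : Type*) : Type _ := α

instance DiscretePoints.instTopologicalSpace (α : Type*) :
    TopologicalSpace (DiscretePoints α) := ⊥

end ConfigPrelude

/-! The map `r` has the section `v ↦ (v, -v)`. Conversely, the straight-line homotopy in `E × E`
from `(x, y)` to `(r(x, y), -r(x, y))` stays in `F₂(E)`: along it the difference of the two points
is a convex combination of two positive multiples of `x - y`, so it never vanishes. -/

namespace Config

variable {M : Type*} [TopologicalSpace M]

lemma apply_zero_ne_apply_one (x : Config M 2) : x.1 0 ≠ x.1 1 :=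
  fun h => zero_ne_one (x.2 h)

lemma ext₂ {x y : Config M 2} (h₀ : x.1 0 = y.1 0) (h₁ : x.1 1 = y.1 1) : x = y :=
  Subtype.ext <| funext fun i => by fin_cases i <;> assumption

lemma continuous_apply {k : ℕ} (i : Fin k) : Continuous fun x : Config M k => x.1 i :=
  (_root_.continuous_apply i).comp continuous_subtype_val

lemma continuous_config2 {X : Type*} [TopologicalSpace X] {f g : X → M} (hf : Continuous f)
    (hg : Continuous g) (hfg : ∀ x, f x ≠ g x) :
    Continuous fun x => config2 (f x) (g x) (hfg x) :=
  Continuous.subtype_mk (continuous_pi fun i => by fin_cases i <;> assumption) _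

end Config

section NormedSpace

variable {E : Type*} [NormedAddCommGroup E] [NormedSpace ℝ E]

lemma SameRay.lineMap_ne_zero {x y : E} (h : SameRay ℝ x y) (hx : x ≠ 0) (hy : y ≠ 0)
    {t : ℝ} (ht : t ∈ Set.Icc (0 : ℝ) 1) : AffineMap.lineMap x y t ≠ 0 := by
  have hnorm : ‖AffineMap.lineMap x y t‖ = (1 - t) * ‖x‖ + t * ‖y‖ := by
    rw [AffineMap.lineMap_apply_module,
      ((h.nonneg_smul_left (sub_nonneg.2 ht.2)).nonneg_smul_right ht.1).norm_add,
      norm_smul, norm_smul, Real.norm_of_nonneg (sub_nonneg.2 ht.2), Real.norm_of_nonneg ht.1]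
  rw [← norm_pos_iff, hnorm]
  rcases ht.2.lt_or_eq with ht₁ | rfl
  · nlinarith [mul_pos (sub_pos.2 ht₁) (norm_pos_iff.2 hx), mul_nonneg ht.1 (norm_nonneg y)]
  · simpa using hy

namespace Config

def affineHomotopy {X : Type*} [TopologicalSpace X] (f g : C(X, Config E 2))
    (h : ∀ x, SameRay ℝ ((f x).1 0 - (f x).1 1) ((g x).1 0 - (g x).1 1)) :
    f.Homotopy g where
  toFun q := config2 (AffineMap.lineMap ((f q.2).1 0) ((g q.2).1 0) (q.1 : ℝ))
    (AffineMap.lineMap ((f q.2).1 1) ((g q.2).1 1) (q.1 : ℝ)) <| by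
      have := (h q.2).lineMap_ne_zero (sub_ne_zero.2 (f q.2).apply_zero_ne_apply_one)
        (sub_ne_zero.2 (g q.2).apply_zero_ne_apply_one) q.1.2
      rwa [← vsub_eq_sub, ← vsub_eq_sub, ← AffineMap.lineMap_vsub_lineMap, vsub_eq_sub,
        sub_ne_zero] at this
  continuous_toFun := by
    have hf (i : Fin 2) : Continuous fun q : I × X => (f q.2).1 i :=
      (continuous_apply i).comp (f.continuous.comp continuous_snd)
    have hg (i : Fin 2) : Continuous fun q : I × X => (g q.2).1 i :=
      (continuous_apply i).comp (g.continuous.comp continuous_snd)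
    have ht : Continuous fun q : I × X => (q.1 : ℝ) := continuous_subtype_val.comp continuous_fst
    exact continuous_config2 ((hf 0).lineMap (hg 0) ht) ((hf 1).lineMap (hg 1) ht) _
  map_zero_left x := ext₂ (by simp [config2]) (by simp [config2])
  map_one_left x := ext₂ (by simp [config2]) (by simp [config2])

variable (E)

noncomputable def direction : C(Config E 2, Metric.sphere (0 : E) 1) where
  toFun x := ⟨‖x.1 0 - x.1 1‖⁻¹ • (x.1 0 - x.1 1), mem_sphere_zero_iff_norm.2 <|
    norm_smul_inv_norm (sub_ne_zero.2 x.apply_zero_ne_apply_one)⟩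
  continuous_toFun := by
    have hsub : Continuous fun x : Config E 2 => x.1 0 - x.1 1 :=
      (continuous_apply 0).sub (continuous_apply 1)
    refine Continuous.subtype_mk ((continuous_iff_continuousAt.2 fun x => ?_).smul hsub) _
    exact hsub.norm.continuousAt.inv₀
      (norm_ne_zero_iff.2 (sub_ne_zero.2 x.apply_zero_ne_apply_one))

def antipodal : C(Metric.sphere (0 : E) 1, Config E 2) where
  toFun v := config2 (v : E) (-v) fun h => ne_neg_of_mem_unit_sphere ℝ v (Subtype.ext h)
  continuous_toFun := continuous_config2 continuous_subtype_val continuous_subtype_val.neg _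

variable {E}

lemma direction_comp_antipodal : (direction E).comp (antipodal E) = ContinuousMap.id _ := by
  ext v : 2
  have hv : ‖(v : E)‖ = 1 := mem_sphere_zero_iff_norm.1 v.2
  change ‖(v : E) - -v‖⁻¹ • ((v : E) - -v) = v
  rw [sub_neg_eq_add, ← two_smul ℝ, norm_smul, hv, smul_smul]
  norm_num

lemma antipodal_comp_direction_homotopic :
    ((antipodal E).comp (direction E)).Homotopic (ContinuousMap.id _) := by
  refine ⟨(affineHomotopy _ _ fun x => ?_).symm⟩
  change SameRay ℝ (x.1 0 - x.1 1) (‖x.1 0 - x.1 1‖⁻¹ • (x.1 0 - x.1 1) -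
    -(‖x.1 0 - x.1 1‖⁻¹ • (x.1 0 - x.1 1)))
  rw [sub_neg_eq_add, ← two_smul ℝ, smul_smul]
  exact SameRay.sameRay_nonneg_smul_right _ (by positivity)

lemma isHtpyEquiv_direction : IsHtpyEquiv (direction E) :=
  ⟨antipodal E, antipodal_comp_direction_homotopic,
    direction_comp_antipodal (E := E) ▸ .refl _⟩

end Config
end NormedSpace

theorem stmt13_general (p : ℕ) :
    ∃ r : C(Config (EuclideanSpace ℝ (Fin p)) 2,
        Metric.sphere (0 : EuclideanSpace ℝ (Fin p)) 1),
      (∀ x : Config (EuclideanSpace ℝ (Fin p)) 2,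
        (r x : EuclideanSpace ℝ (Fin p)) = ‖x.1 0 - x.1 1‖⁻¹ • (x.1 0 - x.1 1)) ∧
      IsHtpyEquiv r :=
  ⟨Config.direction _, fun _ => rfl, Config.isHtpyEquiv_direction⟩

theorem stmt13 (p : ℕ) (hp : 1 ≤ p) :
    ∃ r : C(Config (EuclideanSpace ℝ (Fin p)) 2,
        Metric.sphere (0 : EuclideanSpace ℝ (Fin p)) 1),
      (∀ x : Config (EuclideanSpace ℝ (Fin p)) 2,
        (r x : EuclideanSpace ℝ (Fin p)) = ‖x.1 0 - x.1 1‖⁻¹ • (x.1 0 - x.1 1)) ∧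
      IsHtpyEquiv r :=
  stmt13_general p
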